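/- arXiv:1707.07836 — 4 statements merged into one kernel-verified Lean document; each statement's English description precedes it below -/
import Mathlib

section
/- Let X be a complex Banach space, T ∈ B(X), e* ∈ X*, λ_n scalars, h_n* ∈ X* with T* h_n* = λ_n h_n* − e*, and Z = {x : h_n*(x) = 0 for all n}. Suppose there is z₀ ∈ Z with e*(z₀) ≠ 0, and set f = T z₀. Then for every z ∈ Z, Tz − (e*(z)/e*(z₀)) f ∈ Z; consequently T(Z) ⊆ Z + span{f}, i.e., Z is almost-invariant for T with defect at most one. -/
open NormedSpace

/-!
For `z ∈ Z` the adjoint relation gives `h_n (T z) = λ_n h_n z - e z = -e z`, a value independent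
of `n`. Hence subtracting the multiple `e z / e z₀` of `T z₀` from `T z` kills every `h_n`.
-/

section

variable {R M : Type*} [CommRing R] [TopologicalSpace R] [IsTopologicalRing R]
  [AddCommGroup M] [TopologicalSpace M] [Module R M]

theorem ContinuousLinearMap.apply_map_eq_neg_of_comp_eq_smul_sub {φ e : M →L[R] R}
    {T : M →L[R] M} {c : R} (hφ : φ.comp T = c • φ - e) {z : M} (hz : φ z = 0) :
    φ (T z) = -e z := by
  simpa [hz] using congrArg (fun ψ : M →L[R] R => ψ z) hφ

end

section

variable {K M : Type*} [Field K] [TopologicalSpace K] [IsTopologicalRing K]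
  [AddCommGroup M] [TopologicalSpace M] [Module K M]

theorem ContinuousLinearMap.apply_map_sub_div_smul_map_eq_zero {φ e : M →L[K] K}
    {T : M →L[K] M} {c : K} (hφ : φ.comp T = c • φ - e) {z z₀ : M} (hz : φ z = 0)
    (hz₀ : φ z₀ = 0) (hez₀ : e z₀ ≠ 0) :
    φ (T z - (e z / e z₀) • T z₀) = 0 := by
  rw [map_sub, map_smul, apply_map_eq_neg_of_comp_eq_smul_sub hφ hz,
    apply_map_eq_neg_of_comp_eq_smul_sub hφ hz₀, smul_eq_mul]
  field_simp
  ring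

end

theorem Submodule.mem_sup_span_singleton_of_sub_smul_mem {R M : Type*} [Semiring R]
    [AddCommGroup M] [Module R M] {p : Submodule R M} {x v : M} {a : R}
    (h : x - a • v ∈ p) : x ∈ p ⊔ span R {v} := by
  simpa using add_mem_sup h (smul_mem _ a (mem_span_singleton_self v))

theorem almost_invariant_defect_one_general
    (X : Type*) [NormedAddCommGroup X] [NormedSpace ℂ X]
    (T : X →L[ℂ] X) (e : StrongDual ℂ X) (lam : ℕ → ℂ) (h : ℕ → StrongDual ℂ X)
    (hadj : ∀ n, (h n).comp T = lam n • h n - e)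
    (Z : Submodule ℂ X) (hZ : ∀ x : X, x ∈ Z ↔ ∀ n, h n x = 0)
    (z₀ : X) (hz₀ : z₀ ∈ Z) (hez₀ : e z₀ ≠ 0) (f : X) (hf : f = T z₀) :
    (∀ z ∈ Z, T z - (e z / e z₀) • f ∈ Z) ∧
    (∀ z ∈ Z, T z ∈ Z ⊔ (Submodule.span ℂ {f})) := by
  subst hf
  have hTZ : ∀ z ∈ Z, T z - (e z / e z₀) • T z₀ ∈ Z := fun z hz =>
    (hZ _).2 fun n => (h n).apply_map_sub_div_smul_map_eq_zero (hadj n) ((hZ z).1 hz n)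
      ((hZ z₀).1 hz₀ n) hez₀
  exact ⟨hTZ, fun z hz => Submodule.mem_sup_span_singleton_of_sub_smul_mem (hTZ z hz)⟩

theorem almost_invariant_defect_one
    (X : Type*) [NormedAddCommGroup X] [NormedSpace ℂ X] [CompleteSpace X]
    (T : X →L[ℂ] X) (e : StrongDual ℂ X) (lam : ℕ → ℂ) (h : ℕ → StrongDual ℂ X)
    (hadj : ∀ n, (h n).comp T = lam n • h n - e)
    (Z : Submodule ℂ X) (hZ : ∀ x : X, x ∈ Z ↔ ∀ n, h n x = 0)
    (z₀ : X) (hz₀ : z₀ ∈ Z) (hez₀ : e z₀ ≠ 0) (f : X) (hf : f = T z₀) :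
    (∀ z ∈ Z, T z - (e z / e z₀) • f ∈ Z) ∧
    (∀ z ∈ Z, T z ∈ Z ⊔ (Submodule.span ℂ {f})) :=
  almost_invariant_defect_one_general X T e lam h hadj Z hZ z₀ hz₀ hez₀ f hf
end

section
/- Let X be a complex Banach space, T ∈ B(X), e* ∈ X* a unit functional, scalars λ_n, and h_n* ∈ X* with T* h_n* = λ_n h_n* − e*, x_n* = h_n*/‖h_n*‖, and a bounded biorthogonal sequence (x_n) ⊆ X with x_i*(x_j) = δ_ij, ‖x_n‖ ≤ M, and Σ_n ‖h_n*‖⁻¹ < ε/M. Then f := Σ_n ‖h_n*‖⁻¹ x_n converges in X, ‖f‖ ≤ ε, and h_n*(f) = 1 for every n. -/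
/-!
The coefficients `‖h n‖⁻¹` are summable and the `x n` are bounded by `M`, so `f = ∑ ‖h n‖⁻¹ • x n`
converges absolutely with `‖f‖ ≤ M ∑ ‖h n‖⁻¹ < ε`. Since `h n = ‖h n‖ • x*ₙ` annihilates every `x k`
with `k ≠ n` and sends `x n` to `‖h n‖`, only the `n`-th term survives in `h n f`, giving
`‖h n‖⁻¹ * ‖h n‖ = 1`.
-/

section BoundedCoefficients

variable {ι 𝕜 E : Type*} [NormedField 𝕜] [NormedAddCommGroup E] [NormedSpace 𝕜 E]
  {c : ι → 𝕜} {x : ι → E} {M : ℝ}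

theorem norm_smul_le_of_norm_le (hx : ∀ i, ‖x i‖ ≤ M) (i : ι) :
    ‖c i • x i‖ ≤ ‖c i‖ * M := by
  rw [norm_smul]
  exact mul_le_mul_of_nonneg_left (hx i) (norm_nonneg _)

theorem summable_smul_of_summable_norm_of_norm_le [CompleteSpace E]
    (hc : Summable (fun i => ‖c i‖)) (hx : ∀ i, ‖x i‖ ≤ M) :
    Summable (fun i => c i • x i) :=
  .of_norm_bounded (hc.mul_right M) (norm_smul_le_of_norm_le hx)

theorem norm_tsum_smul_le_of_norm_le (hc : Summable (fun i => ‖c i‖)) (hx : ∀ i, ‖x i‖ ≤ M) :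
    ‖∑' i, c i • x i‖ ≤ (∑' i, ‖c i‖) * M := by
  rw [← tsum_mul_right]
  exact tsum_of_norm_bounded (hc.mul_right M).hasSum (norm_smul_le_of_norm_le hx)

end BoundedCoefficients

theorem ContinuousLinearMap.apply_tsum_smul_of_apply_eq_zero {ι 𝕜 E : Type*} [NormedField 𝕜]
    [NormedAddCommGroup E] [NormedSpace 𝕜 E] {c : ι → 𝕜} {x : ι → E}
    (φ : StrongDual 𝕜 E) (hs : Summable (fun i => c i • x i)) (n : ι)
    (hφ : ∀ k, k ≠ n → φ (x k) = 0) :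
    φ (∑' k, c k • x k) = c n * φ (x n) := by
  rw [φ.map_tsum hs, tsum_eq_single n fun k hk => by rw [map_smul, hφ k hk, smul_zero],
    map_smul, smul_eq_mul]

theorem small_norm_vector_construction_general
    (X : Type*) [NormedAddCommGroup X] [NormedSpace ℂ X] [CompleteSpace X]
    (h : ℕ → StrongDual ℂ X)
    (hne : ∀ n, h n ≠ 0)
    (xs : ℕ → StrongDual ℂ X) (hxs : ∀ n, xs n = (‖h n‖ : ℂ)⁻¹ • h n)
    (x : ℕ → X) (hbiorth : ∀ i j, xs i (x j) = if i = j then 1 else 0)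
    (M : ℝ) (hM : ∀ n, ‖x n‖ ≤ M)
    (ε : ℝ) (hsum : Summable (fun n => ‖h n‖⁻¹))
    (hlt : ∑' n, ‖h n‖⁻¹ < ε / M) :
    Summable (fun n => (‖h n‖ : ℂ)⁻¹ • x n) ∧
    ‖∑' n, (‖h n‖ : ℂ)⁻¹ • x n‖ ≤ ε ∧
    ∀ n, h n (∑' k, (‖h k‖ : ℂ)⁻¹ • x k) = 1 := by
  have hnorm : ∀ n, ‖(‖h n‖ : ℂ)⁻¹‖ = ‖h n‖⁻¹ := fun n => by simp
  have hcoef : Summable (fun n => ‖(‖h n‖ : ℂ)⁻¹‖) := by simpa only [hnorm] using hsum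
  have hS := summable_smul_of_summable_norm_of_norm_le hcoef hM
  have hM0 : 0 < M := by
    refine lt_of_le_of_ne ((norm_nonneg _).trans (hM 0)) fun hM0 => ?_
    rw [← hM0, div_zero] at hlt
    exact hlt.not_ge (tsum_nonneg fun n => inv_nonneg.mpr (norm_nonneg _))
  have hh : ∀ n k, h n (x k) = ‖h n‖ * xs n (x k) := fun n k => by
    have : (‖h n‖ : ℂ) ≠ 0 := by exact_mod_cast norm_ne_zero_iff.mpr (hne n)
    rw [hxs n, smul_apply, smul_eq_mul, mul_inv_cancel_left₀ this]
  refine ⟨hS, ?_, fun n => ?_⟩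
  · calc ‖∑' n, (‖h n‖ : ℂ)⁻¹ • x n‖ ≤ (∑' n, ‖h n‖⁻¹) * M := by
          simpa only [hnorm] using norm_tsum_smul_le_of_norm_le hcoef hM
      _ ≤ ε := (le_div_iff₀ hM0).mp hlt.le
  · rw [(h n).apply_tsum_smul_of_apply_eq_zero hS n fun k hk => by
        rw [hh, hbiorth, if_neg (Ne.symm hk), mul_zero],
      hh, hbiorth, if_pos rfl, mul_one]
    exact inv_mul_cancel₀ (by exact_mod_cast norm_ne_zero_iff.mpr (hne n))

theorem small_norm_vector_construction
    (X : Type*) [NormedAddCommGroup X] [NormedSpace ℂ X] [CompleteSpace X]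
    (T : X →L[ℂ] X) (e : StrongDual ℂ X) (he : ‖e‖ = 1)
    (lam : ℕ → ℂ) (h : ℕ → StrongDual ℂ X)
    (hadj : ∀ n, (h n).comp T = lam n • h n - e)
    (hne : ∀ n, h n ≠ 0)
    (xs : ℕ → StrongDual ℂ X) (hxs : ∀ n, xs n = (‖h n‖ : ℂ)⁻¹ • h n)
    (x : ℕ → X) (hbiorth : ∀ i j, xs i (x j) = if i = j then 1 else 0)
    (M : ℝ) (hM : ∀ n, ‖x n‖ ≤ M)
    (ε : ℝ) (hsum : Summable (fun n => ‖h n‖⁻¹))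
    (hlt : ∑' n, ‖h n‖⁻¹ < ε / M) :
    Summable (fun n => (‖h n‖ : ℂ)⁻¹ • x n) ∧
    ‖∑' n, (‖h n‖ : ℂ)⁻¹ • x n‖ ≤ ε ∧
    ∀ n, h n (∑' k, (‖h k‖ : ℂ)⁻¹ • x k) = 1 :=
  small_norm_vector_construction_general X h hne xs hxs x hbiorth M hM ε hsum hlt
end

section
/- Let X be a complex Banach space and T ∈ B(X) a bounded operator whose kernel N is finite-dimensional with basis {f_1,…,f_n}, and whose closed range R has finite codimension with complement Z spanned by {g_1,…,g_m}, with n ≤ m and X = N ⊕ Y. Define G : X → X by G(f_i) = g_i for 1 ≤ i ≤ n and G|_Y = 0. Then for every nonzero scalar α, the operator T + αG is injective. -/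
/-!
If `(T + α G) x = 0`, then `T x = -α G x` lies in `range T ∩ range G ⊆ R ∩ Z = 0` (`G` kills `Y`
and sends `N` into `Z`), so `x ∈ ker T ∩ ker G`. This intersection is trivial because `G` maps the
basis of `N = ker T` to linearly independent vectors.
-/

open Submodule LinearMap

section

variable {R M M₂ ι : Type*} [Ring R] [AddCommGroup M] [Module R M] [AddCommGroup M₂] [Module R M₂]

theorem LinearMap.injective_add_of_disjoint {T G : M →ₗ[R] M₂}
    (hrange : Disjoint (range T) (range G)) (hker : Disjoint (ker T) (ker G)) :
    Function.Injective (T + G) := by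
  rw [injective_iff_map_eq_zero]
  intro x hx
  have hTG : T x = -G x := eq_neg_of_add_eq_zero_left hx
  have hTx : T x = 0 :=
    hrange.le_bot ⟨mem_range_self T x, hTG ▸ neg_mem (mem_range_self G x)⟩
  have hGx : G x = 0 := by rwa [hTx, zero_eq_neg] at hTG
  exact (Submodule.mem_bot R).mp (hker.le_bot ⟨hTx, hGx⟩)

theorem LinearMap.range_le_of_codisjoint {G : M →ₗ[R] M₂} {N Y : Submodule R M}
    {Z : Submodule R M₂} (hNY : Codisjoint N Y) (hN : N.map G ≤ Z) (hY : Y ≤ ker G) :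
    range G ≤ Z := by
  rw [← Submodule.map_top, ← hNY.eq_top, Submodule.map_sup, le_ker_iff_map.mp hY, sup_bot_eq]
  exact hN

namespace Module.Basis

variable {N : Submodule R M} (b : Basis ι R N) {G : M →ₗ[R] M₂}

theorem map_le_of_forall_mem {Z : Submodule R M₂} (h : ∀ i, G (b i) ∈ Z) : N.map G ≤ Z := by
  rintro _ ⟨v, hv, rfl⟩
  have hspan : span R (Set.range b) ≤ Z.comap (G ∘ₗ N.subtype) :=
    span_le.mpr (Set.range_subset_iff.mpr h)
  rw [b.span_eq] at hspan
  exact hspan (mem_top (x := ⟨v, hv⟩))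

theorem disjoint_ker_of_linearIndependent (h : LinearIndependent R (fun i ↦ G (b i))) :
    Disjoint N (ker G) := by
  rw [disjoint_ker_iff_injOn, Set.injOn_iff_injective]
  exact LinearMap.injective_of_linearIndependent (f := G ∘ₗ N.subtype) b.span_eq h

end Module.Basis

end

theorem perturbation_injective_general
    (X : Type*) [NormedAddCommGroup X] [NormedSpace ℂ X]
    (T : X →L[ℂ] X)
    (N Y R Z : Submodule ℂ X)
    (hN : N = LinearMap.ker T.toLinearMap)
    (hR : R = (LinearMap.range T.toLinearMap).topologicalClosure)
    (hNY : IsCompl N Y)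
    (hRZ : IsCompl R Z)
    (n m : ℕ) (hnm : n ≤ m)
    (fb : Module.Basis (Fin n) ℂ N) (gb : Module.Basis (Fin m) ℂ Z)
    (G : X →L[ℂ] X)
    (hGf : ∀ i : Fin n, G (fb i) = gb (Fin.castLE hnm i))
    (hGY : ∀ y ∈ Y, G y = 0) :
    ∀ α : ℂ, α ≠ 0 → Function.Injective (T + α • G) := by
  intro α hα
  have hrangeT : range T.toLinearMap ≤ R := hR ▸ le_topologicalClosure _
  have hrangeG : range G.toLinearMap ≤ Z :=
    range_le_of_codisjoint hNY.codisjoint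
      (fb.map_le_of_forall_mem fun i ↦ hGf i ▸ (gb _).2) fun y hy ↦ hGY y hy
  have hli : LinearIndependent ℂ (fun i ↦ G (fb i)) := by
    simp only [hGf]
    exact (gb.linearIndependent.map' Z.subtype Z.ker_subtype).comp _
      (Fin.castLE_injective hnm)
  have hker : Disjoint (ker T.toLinearMap) (ker G.toLinearMap) :=
    hN ▸ fb.disjoint_ker_of_linearIndependent hli
  refine injective_add_of_disjoint (G := α • G.toLinearMap) ?_ ?_
  · rw [range_smul _ _ hα]
    exact hRZ.disjoint.mono hrangeT hrangeG
  · rwa [ker_smul _ _ hα]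

theorem perturbation_injective
    (X : Type*) [NormedAddCommGroup X] [NormedSpace ℂ X] [CompleteSpace X]
    (T : X →L[ℂ] X)
    (N Y R Z : Submodule ℂ X)
    (hN : N = LinearMap.ker T.toLinearMap)
    (hR : R = (LinearMap.range T.toLinearMap).topologicalClosure)
    (hNY : IsCompl N Y)
    (hRZ : IsCompl R Z)
    (n m : ℕ) (hnm : n ≤ m)
    (fb : Module.Basis (Fin n) ℂ N) (gb : Module.Basis (Fin m) ℂ Z)
    (G : X →L[ℂ] X)
    (hGf : ∀ i : Fin n, G (fb i) = gb (Fin.castLE hnm i))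
    (hGY : ∀ y ∈ Y, G y = 0) :
    ∀ α : ℂ, α ≠ 0 → Function.Injective (T + α • G) :=
  perturbation_injective_general X T N Y R Z hN hR hNY hRZ n m hnm fb gb G hGf hGY
end

section
/- Let X be a Banach space, T ∈ B(X), and z ∈ X a vector whose orbit (T^n z)_{n≥0} is not a minimal sequence. Let p be the smallest index such that T^p z belongs to the closed span of {T^n z : n ≠ p}. Then T^p z belongs to the closed span of {T^n z : n > p}. -/
/-!
Let `F` be the closed span of the `v n` with `n > p` and `W` the span of the `v n` with `n < p`.
Since `W` is finite-dimensional, `F ⊔ W` is closed, so `v p = f + w` with `f ∈ F`, `w ∈ W`.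
Then `w = v p - f` lies in the closed span of the `v n`, `n ≠ q`, for every `q < p`; as no such `v q`
lies in that closed span, every coefficient of `w` vanishes, so `v p = f ∈ F`.
-/

open Submodule

theorem eq_zero_of_mem_span_image_of_forall_mem {K M ι : Type*} [DivisionRing K]
    [AddCommGroup M] [Module K M] {v : ι → M} {s : Set ι} {W : ι → Submodule K M}
    (hvW : ∀ q ∈ s, ∀ n ∈ s, n ≠ q → v n ∈ W q) (hvq : ∀ q ∈ s, v q ∉ W q)
    {x : M} (hx : x ∈ span K (v '' s)) (hxW : ∀ q ∈ s, x ∈ W q) : x = 0 := by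
  classical
  obtain ⟨c, hcs, rfl⟩ := (Finsupp.mem_span_image_iff_linearCombination K).mp hx
  suffices c = 0 by simp [this]
  ext q
  rw [Finsupp.coe_zero, Pi.zero_apply]
  by_contra hcq
  have hq : q ∈ s := hcs (Finsupp.mem_support_iff.mpr hcq)
  have hsplit : Finsupp.linearCombination K v c =
      c q • v q + ∑ n ∈ c.support.erase q, c n • v n := by
    rw [Finsupp.linearCombination_apply, Finsupp.sum,
      Finset.add_sum_erase _ (fun n => c n • v n) (Finsupp.mem_support_iff.mpr hcq)]
  have hrest : ∑ n ∈ c.support.erase q, c n • v n ∈ W q :=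
    sum_mem fun n hn => smul_mem _ _ <|
      hvW q hq n (hcs (Finset.mem_of_mem_erase hn)) (Finset.ne_of_mem_erase hn)
  have hcq_mem : c q • v q ∈ W q := by
    simpa [hsplit] using sub_mem (hxW q hq) hrest
  exact hvq q hq ((smul_mem_iff _ hcq).mp hcq_mem)

theorem mem_closure_span_Ioi_of_minimal_index {𝕜 E : Type*} [NontriviallyNormedField 𝕜]
    [CompleteSpace 𝕜] [AddCommGroup E] [TopologicalSpace E] [IsTopologicalAddGroup E]
    [Module 𝕜 E] [ContinuousSMul 𝕜 E] (v : ℕ → E) (p : ℕ)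
    (hp : v p ∈ (span 𝕜 (v '' {n | n ≠ p})).topologicalClosure)
    (hmin : ∀ q < p, v q ∉ (span 𝕜 (v '' {n | n ≠ q})).topologicalClosure) :
    v p ∈ (span 𝕜 (v '' Set.Ioi p)).topologicalClosure := by
  set K : ℕ → Submodule 𝕜 E := fun q => (span 𝕜 (v '' {n | n ≠ q})).topologicalClosure
  have hvK : ∀ q n, n ≠ q → v n ∈ K q := fun q n hn =>
    le_topologicalClosure _ (subset_span ⟨n, hn, rfl⟩)
  set F := (span 𝕜 (v '' Set.Ioi p)).topologicalClosure
  set W := span 𝕜 (v '' Set.Iio p)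
  have : FiniteDimensional 𝕜 W := FiniteDimensional.span_of_finite 𝕜 ((Set.finite_Iio p).image v)
  have hspan_le : span 𝕜 (v '' {n | n ≠ p}) ≤ F ⊔ W := by
    refine span_le.mpr ?_
    rintro _ ⟨n, hn, rfl⟩
    rcases Nat.lt_or_gt_of_ne hn with hlt | hgt
    · exact mem_sup_right (subset_span ⟨n, hlt, rfl⟩)
    · exact mem_sup_left (le_topologicalClosure _ (subset_span ⟨n, hgt, rfl⟩))
  have hpFW : v p ∈ F ⊔ W := topologicalClosure_minimal _ hspan_le
    (isClosed_sup_finiteDimensional F W (isClosed_topologicalClosure _)) hp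
  obtain ⟨f, hf, w, hw, hfw⟩ := mem_sup.mp hpFW
  have hFK : ∀ q < p, F ≤ K q := fun q hq =>
    topologicalClosure_mono <| span_mono <| Set.image_mono fun n (hn : p < n) =>
      (hq.trans hn).ne'
  have hw0 : w = 0 := by
    refine eq_zero_of_mem_span_image_of_forall_mem (W := K)
      (fun q _ n _ hn => hvK q n hn) hmin hw fun q (hq : q < p) => ?_
    simpa [← hfw] using sub_mem (hvK q _ (Nat.ne_of_gt hq)) (hFK q hq hf)
  simpa [← hfw, hw0] using hf

theorem minimal_index_orbit_general
    (X : Type*) [NormedAddCommGroup X] [NormedSpace ℂ X]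
    (T : X →L[ℂ] X) (z : X) (p : ℕ)
    (hp : (T ^ p) z ∈
      (Submodule.span ℂ ((fun n => (T ^ n) z) '' {n : ℕ | n ≠ p})).topologicalClosure)
    (hmin : ∀ q < p, (T ^ q) z ∉
      (Submodule.span ℂ ((fun n => (T ^ n) z) '' {n : ℕ | n ≠ q})).topologicalClosure) :
    (T ^ p) z ∈
      (Submodule.span ℂ ((fun n => (T ^ n) z) '' {n : ℕ | p < n})).topologicalClosure :=
  mem_closure_span_Ioi_of_minimal_index (fun n => (T ^ n) z) p hp hmin

theorem minimal_index_orbit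
    (X : Type*) [NormedAddCommGroup X] [NormedSpace ℂ X] [CompleteSpace X]
    (T : X →L[ℂ] X) (z : X) (p : ℕ)
    (hp : (T ^ p) z ∈
      (Submodule.span ℂ ((fun n => (T ^ n) z) '' {n : ℕ | n ≠ p})).topologicalClosure)
    (hmin : ∀ q < p, (T ^ q) z ∉
      (Submodule.span ℂ ((fun n => (T ^ n) z) '' {n : ℕ | n ≠ q})).topologicalClosure) :
    (T ^ p) z ∈
      (Submodule.span ℂ ((fun n => (T ^ n) z) '' {n : ℕ | p < n})).topologicalClosure :=
  minimal_index_orbit_general X T z p hp hmin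
end
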